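/- arXiv:1403.4489 — 8 statements merged into one kernel-verified Lean document; each statement's English description precedes it below -/
import Mathlib

section
/- The Bose-Chowla set A(q,θ) = {a ∈ ℤ/(q²-1) : θ^a - θ ∈ F_q} has exactly q elements, where θ is a generator of the multiplicative group of F_{q²}. -/
/-!
Since `θ` generates `F_{q²}ˣ`, `a ↦ θ ^ a` is a bijection from `ℤ/(q²-1)` onto the nonzero
elements, so `A(q,θ)` is in bijection with the nonzero elements of `θ + F_q`. None of them
vanishes, as `-θ ∉ F_q` (else `θ ^ (2(q-1)) = 1`, too small an exponent for a
generator). Hence `|A(q,θ)| = |F_q| = q`, the `q` fixed points of Frobenius being `0` and the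
`(q-1)`-th roots of unity.
-/

/-- The Bose-Chowla set: `a` with `θ^a - θ` in the subfield `F_q`
(characterized as fixed points of the `q`-power Frobenius). -/
def BoseChowla (q : ℕ) {F : Type*} [Field F] (θ : F) : Set (ZMod (q ^ 2 - 1)) :=
  {a | (θ ^ a.val - θ) ^ q = θ ^ a.val - θ}

/-- The Cayley sum graph `G_{q,θ}`: `x ~ y` iff `x ≠ y` and `x + y ∈ A(q,θ)`. -/
def CayleyGraph (q : ℕ) {F : Type*} [Field F] (θ : F) : SimpleGraph (ZMod (q ^ 2 - 1)) :=
  SimpleGraph.fromRel (fun x y => x + y ∈ BoseChowla q θ)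

/-- A graph is `C₄`-free: no four vertices form a 4-cycle. -/
def C4Free {V : Type*} (G : SimpleGraph V) : Prop :=
  ∀ a b c d : V, G.Adj a b → G.Adj b c → G.Adj c d → G.Adj d a → a = c ∨ b = d

open Polynomial

theorem Nat.sq_sub_one_eq_mul (q : ℕ) : q ^ 2 - 1 = (q + 1) * (q - 1) := by
  simpa using Nat.sq_sub_sq q 1

theorem ncard_setOf_pow_val_mem {M : Type*} [Monoid M] {θ : M} {n : ℕ} [NeZero n]
    (hθ : orderOf θ = n) {T : Set M} (hT : T ⊆ Set.range (θ ^ · : ℕ → M)) :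
    {a : ZMod n | θ ^ a.val ∈ T}.ncard = T.ncard := by
  have hinj : Function.Injective fun a : ZMod n => θ ^ a.val := fun a b hab =>
    ZMod.val_injective n <|
      pow_injOn_Iio_orderOf (by simp [hθ, a.val_lt]) (by simp [hθ, b.val_lt]) hab
  have hrange : Set.range (θ ^ · : ℕ → M) ⊆ Set.range fun a : ZMod n => θ ^ a.val := by
    rintro _ ⟨k, rfl⟩
    exact ⟨k, by simp only [ZMod.val_natCast, ← hθ, pow_mod_orderOf]⟩
  rw [← Set.ncard_image_of_injective _ hinj]
  exact congrArg Set.ncard (Set.image_preimage_eq_of_subset (hT.trans hrange))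

theorem ncard_setOf_pow_succ_eq_self {R : Type*} [CommRing R] [IsDomain R] {ζ : R} {m : ℕ}
    (hm : 0 < m) (hζ : IsPrimitiveRoot ζ m) : {x : R | x ^ (m + 1) = x}.ncard = m + 1 := by
  have hset : {x : R | x ^ (m + 1) = x} = insert 0 ↑(nthRootsFinset m (1 : R)) := by
    ext x
    have hfix : x ^ (m + 1) = x ↔ x ^ m = 1 ∨ x = 0 := by
      rw [← mul_eq_mul_right_iff, one_mul, pow_succ]
    simp only [Set.mem_ofPred_eq, hfix, Set.mem_insert_iff, Finset.mem_coe,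
      mem_nthRootsFinset hm, or_comm]
  rw [hset, Set.ncard_insert_of_notMem, Set.ncard_coe_finset, hζ.card_nthRootsFinset]
  simp [mem_nthRootsFinset hm, zero_pow hm.ne']

theorem neg_pow_ne_neg_of_orderOf_eq {K : Type*} [Field K] {θ : K} {q : ℕ} (hq : 2 ≤ q)
    (hθ : orderOf θ = q ^ 2 - 1) : (-θ) ^ q ≠ -θ := by
  intro hfix
  have hθ0 : θ ≠ 0 := by
    rintro rfl
    rw [orderOf_zero, Nat.sq_sub_one_eq_mul] at hθ
    exact Nat.mul_ne_zero (by omega) (by omega) hθ.symm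
  have hroot : (-θ) ^ (q - 1) = 1 := by
    refine mul_right_cancel₀ (neg_ne_zero.mpr hθ0) ?_
    rwa [← pow_succ, Nat.sub_add_cancel (by omega), one_mul]
  have hdvd : q ^ 2 - 1 ∣ 2 * (q - 1) := by
    rw [← hθ]
    apply orderOf_dvd_of_pow_eq_one
    rw [pow_mul, ← neg_sq, ← pow_mul, mul_comm, pow_mul, hroot, one_pow]
  have hle := Nat.le_of_dvd (by omega) hdvd
  rw [Nat.sq_sub_one_eq_mul] at hle
  have := Nat.le_of_mul_le_mul_right hle (by omega : 0 < q - 1)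
  omega

theorem FiniteField.mem_range_pow_of_orderOf_eq {K : Type*} [Field K] [Fintype K] {θ x : K}
    (hθ : orderOf θ = Fintype.card K - 1) (hx : x ≠ 0) :
    x ∈ Set.range (θ ^ · : ℕ → K) := by
  have : NeZero (Fintype.card K - 1) := ⟨by have := Fintype.one_lt_card (α := K); omega⟩
  obtain ⟨i, -, hi⟩ := (hθ ▸ IsPrimitiveRoot.orderOf θ).eq_pow_of_pow_eq_one
    (FiniteField.pow_card_sub_one_eq_one x hx)
  exact ⟨i, hi⟩

theorem bose_chowla_card_general (q : ℕ) (F : Type*) [Field F] [Fintype F]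
    (hF : Fintype.card F = q ^ 2) (θ : F) (hθ : orderOf θ = q ^ 2 - 1) :
    (BoseChowla q θ).ncard = q := by
  have hq : 2 ≤ q := by nlinarith [hF ▸ Fintype.one_lt_card (α := F)]
  have : NeZero (q ^ 2 - 1) :=
    ⟨by rw [Nat.sq_sub_one_eq_mul]; exact Nat.mul_ne_zero (by omega) (by omega)⟩
  have hfix : {x : F | x ^ q = x}.ncard = q := by
    obtain ⟨m, rfl⟩ : ∃ m, q = m + 1 := ⟨q - 1, by omega⟩
    refine ncard_setOf_pow_succ_eq_self (by omega) ((hθ ▸ IsPrimitiveRoot.orderOf θ).pow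
      (a := m + 1 + 1) (Nat.pos_of_ne_zero NeZero.out) ?_)
    rw [Nat.sq_sub_one_eq_mul, Nat.add_sub_cancel]
  have hpow : {y : F | (y - θ) ^ q = y - θ} ⊆ Set.range (θ ^ · : ℕ → F) := by
    refine fun y hy => FiniteField.mem_range_pow_of_orderOf_eq (hF ▸ hθ) ?_
    rintro rfl
    exact neg_pow_ne_neg_of_orderOf_eq hq hθ (by simpa using hy)
  calc (BoseChowla q θ).ncard = {y : F | (y - θ) ^ q = y - θ}.ncard :=
        ncard_setOf_pow_val_mem hθ hpow
    _ = {x : F | x ^ q = x}.ncard :=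
        Set.ncard_preimage_of_injective_subset_range (s := {x : F | x ^ q = x})
          sub_left_injective fun x _ => ⟨x + θ, add_sub_cancel_right x θ⟩
    _ = q := hfix

theorem bose_chowla_card (q : ℕ) (hq : IsPrimePow q) (F : Type*) [Field F] [Fintype F]
    (hF : Fintype.card F = q ^ 2) (θ : F) (hθ : orderOf θ = q ^ 2 - 1) :
    (BoseChowla q θ).ncard = q :=
  bose_chowla_card_general q F hF θ hθ
end

section
/- The Bose-Chowla set A(q,θ) is a Sidon set in ℤ/(q²-1): if a+b = c+d with a,b,c,d ∈ A(q,θ), then {a,b} = {c,d}. -/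
section OrderOf

variable {G : Type*} [Monoid G] {x : G} {n : ℕ} [NeZero n]

theorem pow_val_add_of_orderOf_eq (hx : orderOf x = n) (a b : ZMod n) :
    x ^ (a + b).val = x ^ a.val * x ^ b.val := by
  have hfin : IsOfFinOrder x := orderOf_pos_iff.mp (hx ▸ Nat.pos_of_neZero n)
  rw [← pow_add, hfin.pow_inj_mod, hx, ZMod.val_add, Nat.mod_mod]

theorem pow_val_injective_of_orderOf_eq (hx : orderOf x = n) :
    Function.Injective fun a : ZMod n => x ^ a.val := fun a b h =>
  ZMod.val_injective n <|
    pow_injOn_Iio_orderOf (hx ▸ ZMod.val_lt a : a.val < orderOf x) (hx ▸ ZMod.val_lt b) h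

end OrderOf

theorem eq_and_eq_or_eq_and_eq_of_add_eq_add_of_mul_eq_mul {R : Type*} [CommRing R]
    [NoZeroDivisors R] {x y z w : R} (hsum : x + y = z + w) (hprod : x * y = z * w) :
    x = z ∧ y = w ∨ x = w ∧ y = z := by
  have hroots : (z - x) * (z - y) = 0 := by linear_combination (-z) * hsum + hprod
  rcases mul_eq_zero.mp hroots with h | h
  · obtain rfl : z = x := sub_eq_zero.mp h
    exact Or.inl ⟨rfl, add_left_cancel hsum⟩
  · obtain rfl : z = y := sub_eq_zero.mp h
    exact Or.inr ⟨add_right_cancel (hsum.trans (add_comm z w)), rfl⟩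

theorem Subfield.eq_and_eq_or_eq_and_eq_of_mul_eq_mul {F : Type*} [Field F] {K : Subfield F}
    {θ x y z w : F} (hθ : θ ∉ K) (hx : x - θ ∈ K) (hy : y - θ ∈ K) (hz : z - θ ∈ K)
    (hw : w - θ ∈ K) (h : x * y = z * w) : x = z ∧ y = w ∨ x = w ∧ y = z := by
  refine eq_and_eq_or_eq_and_eq_of_add_eq_add_of_mul_eq_mul ?_ h
  set e := (x - θ) + (y - θ) - ((z - θ) + (w - θ))
  have he : e ∈ K := sub_mem (add_mem hx hy) (add_mem hz hw)
  have hθe : θ * e = (z - θ) * (w - θ) - (x - θ) * (y - θ) := by linear_combination h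
  by_cases he0 : e = 0
  · linear_combination he0
  · refine absurd ?_ hθ
    rw [← mul_div_cancel_right₀ θ he0, hθe]
    exact div_mem (sub_mem (mul_mem hz hw) (mul_mem hx hy)) he

theorem mem_boseChowla_iff {F : Type*} [Field F] {p : ℕ} [ExpChar F p] (k : ℕ) (θ : F)
    (a : ZMod ((p ^ k) ^ 2 - 1)) :
    a ∈ BoseChowla (p ^ k) θ ↔
      θ ^ a.val - θ ∈ (iterateFrobenius F p k).eqLocusField (RingHom.id F) :=
  Iff.rfl

theorem bose_chowla_sidon (q : ℕ) (hq : IsPrimePow q) (F : Type*) [Field F] [Fintype F]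
    (hF : Fintype.card F = q ^ 2) (θ : F) (hθ : orderOf θ = q ^ 2 - 1) :
    ∀ a ∈ BoseChowla q θ, ∀ b ∈ BoseChowla q θ, ∀ c ∈ BoseChowla q θ,
      ∀ d ∈ BoseChowla q θ, a + b = c + d → (a = c ∧ b = d) ∨ (a = d ∧ b = c) := by
  intro a ha b hb c hc d hd habcd
  have hq2 : 2 ≤ q := hq.two_le
  have hq_lt : q < q ^ 2 - 1 := Nat.lt_sub_iff_add_lt.mpr (by nlinarith)
  have : NeZero (q ^ 2 - 1) := ⟨by omega⟩
  have hθq : θ ^ q ≠ θ := fun h =>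
    absurd (pow_injOn_Iio_orderOf (hθ ▸ hq_lt : q < orderOf θ) (by omega : 1 < orderOf θ)
      (h.trans (pow_one θ).symm)) (by omega)
  obtain ⟨p, k, hp, -, rfl⟩ := hq
  have : Fact p.Prime := ⟨hp.nat_prime⟩
  have : CharP F p := charP_of_card_eq_prime_pow (f := k * 2) (by rw [hF, pow_mul])
  rw [mem_boseChowla_iff] at ha hb hc hd
  have hprod : θ ^ a.val * θ ^ b.val = θ ^ c.val * θ ^ d.val := by
    rw [← pow_val_add_of_orderOf_eq hθ, ← pow_val_add_of_orderOf_eq hθ, habcd]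
  have hinj := pow_val_injective_of_orderOf_eq hθ
  rcases Subfield.eq_and_eq_or_eq_and_eq_of_mul_eq_mul hθq ha hb hc hd hprod with h | h
  · exact Or.inl ⟨hinj h.1, hinj h.2⟩
  · exact Or.inr ⟨hinj h.1, hinj h.2⟩
end

section
/- The Bose-Chowla set A(q,θ) is disjoint from the subgroup H of ℤ/(q²-1) generated by q+1. -/
theorem mul_eq_self_of_mem_zmultiples_add_one {R : Type*} [Ring R] {x a : R} (hx : x ^ 2 = 1)
    (ha : a ∈ AddSubgroup.zmultiples (x + 1)) : a * x = a := by
  obtain ⟨k, rfl⟩ := AddSubgroup.mem_zmultiples_iff.mp ha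
  rw [smul_mul_assoc, add_mul, ← sq, hx, one_mul, add_comm]

theorem ZMod.natCast_sq_eq_one {q : ℕ} (hq : 0 < q) : (q : ZMod (q ^ 2 - 1)) ^ 2 = 1 := by
  have h := ZMod.natCast_self (q ^ 2 - 1)
  push_cast [Nat.cast_sub (Nat.one_le_pow 2 q hq)] at h
  exact sub_eq_zero.mp h

theorem ZMod.val_mul_modEq_val_of_mem_zmultiples {q : ℕ} (hq : 1 < q) {a : ZMod (q ^ 2 - 1)}
    (ha : a ∈ AddSubgroup.zmultiples ((q : ZMod (q ^ 2 - 1)) + 1)) :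
    a.val * q ≡ a.val [MOD q ^ 2 - 1] := by
  have : NeZero (q ^ 2 - 1) := ⟨by have : 4 ≤ q ^ 2 := Nat.pow_le_pow_left hq 2; omega⟩
  rw [← ZMod.natCast_eq_natCast_iff, Nat.cast_mul, ZMod.natCast_val, ZMod.cast_id]
  exact mul_eq_self_of_mem_zmultiples_add_one (ZMod.natCast_sq_eq_one (by omega)) ha

theorem FiniteField.sub_pow_of_dvd_card {F : Type*} [Field F] [Fintype F] {q : ℕ}
    (hq : q ∣ Fintype.card F) (x y : F) : (x - y) ^ q = x ^ q - y ^ q := by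
  obtain ⟨n, hp, hcard⟩ := FiniteField.card F (ringChar F)
  have : Fact (ringChar F).Prime := ⟨hp⟩
  rw [hcard] at hq
  obtain ⟨m, -, rfl⟩ := (Nat.dvd_prime_pow hp).mp hq
  exact sub_pow_char_pow x y m

theorem bose_chowla_disjoint_subgroup_general (q : ℕ) (F : Type*) [Field F]
    [Fintype F] (hF : Fintype.card F = q ^ 2) (θ : F) (hθ : orderOf θ = q ^ 2 - 1) :
    ∀ a ∈ BoseChowla q θ,
      a ∉ AddSubgroup.zmultiples ((q : ZMod (q ^ 2 - 1)) + 1) := by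
  intro a ha hmem
  have hq : 2 ≤ q := by
    have := hF ▸ Fintype.one_lt_card (α := F)
    nlinarith
  have hq_lt : q < q ^ 2 - 1 := by
    have : 2 * q ≤ q ^ 2 := by nlinarith
    omega
  have hθ_fin : IsOfFinOrder θ := orderOf_pos_iff.mp (by omega)
  have hθa_fixed : (θ ^ a.val) ^ q = θ ^ a.val := by
    rw [← pow_mul, hθ_fin.pow_eq_pow_iff_modEq, hθ]
    exact ZMod.val_mul_modEq_val_of_mem_zmultiples hq hmem
  have hθ_fixed : θ ^ q = θ ^ 1 := by
    have : (θ ^ a.val - θ) ^ q = θ ^ a.val - θ := ha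
    rw [FiniteField.sub_pow_of_dvd_card (hF ▸ dvd_pow_self q two_ne_zero), hθa_fixed] at this
    simpa using this
  have hq_modEq : q % (q ^ 2 - 1) = 1 % (q ^ 2 - 1) := by
    rwa [hθ_fin.pow_eq_pow_iff_modEq, hθ] at hθ_fixed
  rw [Nat.mod_eq_of_lt hq_lt, Nat.mod_eq_of_lt (by omega)] at hq_modEq
  omega

theorem bose_chowla_disjoint_subgroup (q : ℕ) (hq : IsPrimePow q) (F : Type*) [Field F]
    [Fintype F] (hF : Fintype.card F = q ^ 2) (θ : F) (hθ : orderOf θ = q ^ 2 - 1) :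
    ∀ a ∈ BoseChowla q θ,
      a ∉ AddSubgroup.zmultiples ((q : ZMod (q ^ 2 - 1)) + 1) :=
  bose_chowla_disjoint_subgroup_general q F hF θ hθ
end

section
/- The difference set A - A of the Bose-Chowla set A = A(q,θ) equals ℤ/(q²-1) minus the nonzero elements of the subgroup generated by q+1; that is, A - A = ℤ/(q²-1) \ {q+1, 2(q+1), ..., (q-2)(q+1)}. -/
section PowVal

variable {M : Type*} [Monoid M] {g : M} {n : ℕ}

theorem pow_val_add [NeZero n] (hg : g ^ n = 1) (a b : ZMod n) :
    g ^ (a + b).val = g ^ a.val * g ^ b.val := by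
  rw [ZMod.val_add, ← pow_eq_pow_mod _ hg, pow_add]

theorem pow_val_pow (hg : g ^ n = 1) (a : ZMod n) (m : ℕ) :
    (g ^ a.val) ^ m = g ^ (a * m).val := by
  rw [ZMod.val_mul, ZMod.val_natCast, Nat.mul_mod_mod, ← pow_eq_pow_mod _ hg, pow_mul]

theorem pow_val_injective [NeZero n] (hg : orderOf g = n) :
    Function.Injective fun a : ZMod n => g ^ a.val := by
  intro a b hab
  have hfin : IsOfFinOrder g := orderOf_pos_iff.mp (hg ▸ NeZero.pos n)
  have hmod := hfin.pow_eq_pow_iff_modEq.mp hab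
  rw [hg] at hmod
  rw [← ZMod.natCast_zmod_val a, ← ZMod.natCast_zmod_val b, ZMod.natCast_eq_natCast_iff]
  exact hmod

theorem pow_val_eq_one_iff [NeZero n] (hg : orderOf g = n) (a : ZMod n) :
    g ^ a.val = 1 ↔ a = 0 := by
  rw [← pow_zero g, ← ZMod.val_zero, (pow_val_injective hg).eq_iff]

theorem exists_sub_eq_iff_exists_mul_mem [NeZero n] (hg : g ^ n = 1) {T : Set M}
    (hT : T ⊆ Set.range fun b : ZMod n => g ^ b.val) (x : ZMod n) :
    (∃ a : ZMod n, g ^ a.val ∈ T ∧ ∃ b : ZMod n, g ^ b.val ∈ T ∧ a - b = x) ↔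
      ∃ t ∈ T, g ^ x.val * t ∈ T := by
  constructor
  · rintro ⟨a, ha, b, hb, rfl⟩
    refine ⟨_, hb, ?_⟩
    rwa [← pow_val_add hg, sub_add_cancel]
  · rintro ⟨t, ht, hxt⟩
    obtain ⟨b, rfl⟩ := hT ht
    exact ⟨x + b, by rwa [pow_val_add hg], b, ht, add_sub_cancel_right x b⟩

end PowVal

theorem ZMod.mem_zmultiples_iff_mul_eq_zero {n a b : ℕ} (hn : a * b = n) (hb : b ≠ 0)
    (x : ZMod n) : x ∈ AddSubgroup.zmultiples (a : ZMod n) ↔ x * b = 0 := by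
  subst hn
  obtain ⟨m, rfl⟩ := ZMod.intCast_surjective x
  have hb' : (b : ℤ) ≠ 0 := by exact_mod_cast hb
  rw [← Int.cast_natCast b, ← Int.cast_mul, ZMod.intCast_zmod_eq_zero_iff_dvd, Nat.cast_mul,
    Int.mul_dvd_mul_iff_right hb', AddSubgroup.mem_zmultiples_iff]
  constructor
  · rintro ⟨k, hk⟩
    rw [zsmul_eq_mul, ← Int.cast_natCast a, ← Int.cast_mul, ZMod.intCast_eq_intCast_iff_dvd_sub,
      Nat.cast_mul] at hk
    exact (dvd_sub_left (dvd_mul_left _ _)).mp ((dvd_mul_right _ _).trans hk)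
  · rintro ⟨k, rfl⟩
    exact ⟨k, by push_cast; ring⟩

theorem pow_val_pow_eq_self_iff {M : Type*} [Monoid M] {g : M} {q : ℕ} (hq : 2 ≤ q)
    (hg : orderOf g = q ^ 2 - 1) (x : ZMod (q ^ 2 - 1)) :
    (g ^ x.val) ^ q = g ^ x.val ↔ x ∈ AddSubgroup.zmultiples ((q : ZMod (q ^ 2 - 1)) + 1) := by
  have hn : (q + 1) * (q - 1) = q ^ 2 - 1 := by simpa using (Nat.sq_sub_sq q 1).symm
  have : NeZero (q ^ 2 - 1) := ⟨hn ▸ Nat.mul_ne_zero (by omega) (by omega)⟩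
  rw [pow_val_pow (hg ▸ pow_orderOf_eq_one g), (pow_val_injective hg).eq_iff, ← sub_eq_zero,
    ← mul_sub_one, ← Nat.cast_pred (by omega), ← Nat.cast_succ,
    ZMod.mem_zmultiples_iff_mul_eq_zero hn (by omega)]

theorem exists_pow_val_eq_of_orderOf_eq {F : Type*} [Field F] [Fintype F] {n : ℕ} [NeZero n]
    {θ : F} (hθ : orderOf θ = n) (hF : Fintype.card F = n + 1) {z : F} (hz : z ≠ 0) :
    ∃ a : ZMod n, θ ^ a.val = z := by
  classical
  have hθ0 : θ ≠ 0 := by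
    rintro rfl
    simp [NeZero.ne' n] at hθ
  let f : ZMod n → Fˣ := fun a => Units.mk0 (θ ^ a.val) (pow_ne_zero _ hθ0)
  have hf : Function.Bijective f := by
    refine (Fintype.bijective_iff_injective_and_card f).mpr ⟨fun a b hab => ?_, ?_⟩
    · exact pow_val_injective hθ (Units.ext_iff.mp hab)
    · rw [ZMod.card, Fintype.card_units, hF, Nat.add_sub_cancel]
  obtain ⟨a, ha⟩ := hf.2 (Units.mk0 z hz)
  exact ⟨a, Units.ext_iff.mp ha⟩

theorem exists_sub_fixed_mul_sub_fixed_iff {F : Type*} [Field F] (σ : F →+* F)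
    (hσ : ∀ x, σ (σ x) = x) {θ : F} (hθ : σ θ ≠ θ) (y : F) :
    (∃ t, σ (t - θ) = t - θ ∧ σ (y * t - θ) = y * t - θ) ↔ y = 1 ∨ σ y ≠ y := by
  constructor
  · rintro ⟨t, ht, hyt⟩
    refine or_iff_not_imp_right.mpr fun hy => ?_
    rw [not_not] at hy
    simp only [map_sub, map_mul, hy] at ht hyt
    have : (y - 1) * (σ θ - θ) = 0 := by linear_combination hyt - y * ht
    exact sub_eq_zero.mp ((mul_eq_zero.mp this).resolve_right (sub_ne_zero.mpr hθ))
  · rintro (rfl | hy)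
    · exact ⟨θ, by simp⟩
    -- Cramer's rule for `(y - 1) θ = c - y d` and its `σ`-conjugate, with `c, d` fixed by `σ`.
    set d := ((y - 1) * θ - (σ y - 1) * σ θ) / (σ y - y) with hd_def
    have hden : σ y - y ≠ 0 := sub_ne_zero.mpr hy
    have hden' : y - σ y ≠ 0 := sub_ne_zero.mpr (Ne.symm hy)
    have hd : σ d = d := by
      rw [hd_def, map_div₀]
      simp only [map_sub, map_mul, map_one, hσ]
      rw [div_eq_div_iff hden' hden]
      ring
    refine ⟨θ + d, by simp [hd], ?_⟩
    simp only [map_sub, map_mul, map_add, hd]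
    rw [hd_def]
    field_simp
    ring

theorem exists_ringHom_eq_pow_of_card_eq {F : Type*} [Field F] [Fintype F] {q m : ℕ}
    (hq : IsPrimePow q) (hF : Fintype.card F = q ^ m) : ∃ σ : F →+* F, ∀ x, σ x = x ^ q := by
  obtain ⟨p, k, hp, -, rfl⟩ := hq
  have : Fact p.Prime := ⟨hp.nat_prime⟩
  have : CharP F p := charP_of_card_eq_prime_pow (f := k * m) (by rw [hF, pow_mul])
  exact ⟨iterateFrobenius F p k, fun x => rfl⟩

theorem bose_chowla_diff_set (q : ℕ) (hq : IsPrimePow q) (F : Type*) [Field F]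
    [Fintype F] (hF : Fintype.card F = q ^ 2) (θ : F) (hθ : orderOf θ = q ^ 2 - 1) :
    {x : ZMod (q ^ 2 - 1) | ∃ a ∈ BoseChowla q θ, ∃ b ∈ BoseChowla q θ, a - b = x} =
      {0} ∪ (↑(AddSubgroup.zmultiples ((q : ZMod (q ^ 2 - 1)) + 1)) :
        Set (ZMod (q ^ 2 - 1)))ᶜ := by
  obtain ⟨σ, hσ⟩ := exists_ringHom_eq_pow_of_card_eq hq hF
  have hq2 := hq.two_le
  have hq4 : q + 2 ≤ q ^ 2 := by nlinarith
  have : NeZero (q ^ 2 - 1) := ⟨by omega⟩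
  have hσσ (x : F) : σ (σ x) = x := by rw [hσ, hσ, ← pow_mul, ← sq, ← hF, FiniteField.pow_card]
  have hσθ : σ θ ≠ θ := fun h => by
    have := pow_injOn_Iio_orderOf (x := θ) (by omega : q < orderOf θ) (by omega : 1 < orderOf θ)
      (by simpa [hσ] using h)
    omega
  have hT : {z : F | σ (z - θ) = z - θ} ⊆ Set.range fun b : ZMod (q ^ 2 - 1) => θ ^ b.val :=
    fun z hz => exists_pow_val_eq_of_orderOf_eq hθ (by omega) fun h0 => hσθ (by simpa [h0] using hz)
  ext x
  have hA := exists_sub_eq_iff_exists_mul_mem (hθ ▸ pow_orderOf_eq_one θ) hT x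
  simp only [Set.mem_ofPred_eq, BoseChowla, ← hσ] at hA ⊢
  rw [hA, exists_sub_fixed_mul_sub_fixed_iff σ hσσ hσθ, pow_val_eq_one_iff hθ, ne_eq, hσ,
    pow_val_pow_eq_self_iff hq2 hθ]
  rfl
end

section
/- If q is an odd prime power, the graph G_{q,θ} has exactly q - 1 absolute points (vertices x with 2x ∈ A(q,θ)). -/
/-!
Write `ȳ = y ^ q` for the Frobenius of `F = 𝔽_{q²}`. With `y = θ ^ x`, the vertex `x` is absolute
iff `ȳ² - y² = θ̄ - θ =: δ`, i.e. `(ȳ - y)(ȳ + y) = δ`. Then `u = ȳ - y` is nonzero with `ū = -u`,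
and since `q` is odd, `y = (δ / u - u) / 2` is recovered from `u`. So the absolute points
correspond to the nonzero `u` with `ū = -u`, and there are exactly `q` such `u` including `0`.
-/

open Polynomial

theorem ncard_setOf_pow_eq_mul_le {F : Type*} [Field F] {n : ℕ} (hn : 1 < n) (a : F) :
    {x : F | x ^ n = a * x}.ncard ≤ n := by
  have hdeg : (X ^ n - C a * X : F[X]).natDegree = n := by
    rw [natDegree_sub_eq_left_of_natDegree_lt] <;>
      simp only [natDegree_X_pow]
    exact (natDegree_C_mul_le a X).trans natDegree_X_le |>.trans_lt hn
  have hne : (X ^ n - C a * X : F[X]) ≠ 0 := ne_zero_of_natDegree_gt (hdeg ▸ hn)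
  calc {x : F | x ^ n = a * x}.ncard ≤ ((X ^ n - C a * X : F[X]).rootSet F).ncard :=
        Set.ncard_le_ncard (fun x hx => by simp_all [mem_rootSet, sub_eq_zero]) (Set.toFinite _)
    _ ≤ n := (ncard_rootSet_le _ F).trans hdeg.le

theorem AddMonoidHom.card_ker_mul_card_range {G H : Type*} [AddGroup G] [AddGroup H]
    (f : G →+ H) : Nat.card f.ker * Nat.card f.range = Nat.card G := by
  rw [← AddSubgroup.index_ker, AddSubgroup.card_mul_index]

section FrobeniusOfQuadraticExtension

variable {F : Type*} [Field F] [Fintype F] {p k : ℕ}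

theorem pow_pow_pow_eq_self_of_card_eq (hF : Fintype.card F = (p ^ k) ^ 2) (x : F) :
    (x ^ p ^ k) ^ p ^ k = x := by
  rw [← pow_mul, ← sq, ← hF, FiniteField.pow_card]

variable [ExpChar F p]

theorem pow_expChar_pow_sub_self_pow (hF : Fintype.card F = (p ^ k) ^ 2) (x : F) :
    (x ^ p ^ k - x) ^ p ^ k = -(x ^ p ^ k - x) := by
  rw [sub_pow_expChar_pow, pow_pow_pow_eq_self_of_card_eq hF, neg_sub]

/-- The kernel and the image of `u ↦ u ^ q + u` lie in the root sets of `X ^ q + X` and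
`X ^ q - X`, and their sizes multiply to `q²`. -/
theorem ncard_setOf_pow_expChar_pow_eq_neg (hF : Fintype.card F = (p ^ k) ^ 2) :
    {u : F | u ^ p ^ k = -u}.ncard = p ^ k := by
  have hq : 1 < p ^ k := by
    have := Fintype.one_lt_card (α := F)
    rwa [hF, Nat.one_lt_pow_iff two_ne_zero] at this
  let φ : F →+ F := (iterateFrobenius F p k).toAddMonoidHom + AddMonoidHom.id F
  have hker : Nat.card φ.ker = {u : F | u ^ p ^ k = -u}.ncard := by
    rw [← Nat.card_coe_set_eq]
    exact Nat.card_congr <| Equiv.subtypeEquivRight fun u => by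
      simp [φ, iterateFrobenius_def, eq_neg_iff_add_eq_zero]
  have hker_le : {u : F | u ^ p ^ k = -u}.ncard ≤ p ^ k := by
    simpa using ncard_setOf_pow_eq_mul_le hq (-1 : F)
  have hrange_le : Nat.card φ.range ≤ p ^ k := by
    rw [← SetLike.coe_sort_coe, Nat.card_coe_set_eq]
    refine le_trans (Set.ncard_le_ncard ?_ (Set.toFinite _)) (ncard_setOf_pow_eq_mul_le hq 1)
    rintro _ ⟨v, rfl⟩
    simp [φ, iterateFrobenius_def, add_pow_expChar_pow, pow_pow_pow_eq_self_of_card_eq hF,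
      add_comm]
  have hcard := φ.card_ker_mul_card_range
  rw [Nat.card_eq_fintype_card (α := F), hF, hker] at hcard
  nlinarith

theorem bijOn_pow_expChar_pow_sub_self (hF : Fintype.card F = (p ^ k) ^ 2) (h2 : (2 : F) ≠ 0)
    {δ : F} (hδ : δ ≠ 0) (hδq : δ ^ p ^ k = -δ) :
    Set.BijOn (fun y => y ^ p ^ k - y) {y | (y ^ p ^ k) ^ 2 - y ^ 2 = δ}
      ({u | u ^ p ^ k = -u} \ {0}) := by
  have hfactor (y : F) : (y ^ p ^ k) ^ 2 - y ^ 2 = (y ^ p ^ k - y) * (y ^ p ^ k + y) := by ring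
  refine Set.InvOn.bijOn (f' := fun u => (δ / u - u) / 2) ⟨?_, ?_⟩ ?_ ?_
  · intro y hy
    have hu : y ^ p ^ k - y ≠ 0 := fun hu => hδ (by rw [← hy.out, hfactor, hu, zero_mul])
    simp only [← hy.out, hfactor]
    field_simp
    ring
  · rintro u ⟨hu, hu0 : u ≠ 0⟩
    simp only [← iterateFrobenius_def, map_div₀, map_sub, map_ofNat] at hu hδq ⊢
    rw [hu.out, hδq]
    field_simp
    ring
  · intro y hy
    refine ⟨pow_expChar_pow_sub_self_pow hF y, fun hu => hδ ?_⟩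
    rw [← hy.out, hfactor, show y ^ p ^ k - y = 0 from hu, zero_mul]
  · rintro u ⟨hu, hu0 : u ≠ 0⟩
    show ((_ / 2) ^ p ^ k) ^ 2 - (_ / 2) ^ 2 = δ
    simp only [← iterateFrobenius_def, map_div₀, map_sub, map_ofNat] at hu hδq ⊢
    rw [hu.out, hδq]
    field_simp
    ring

theorem ncard_setOf_sq_pow_expChar_pow_sub_sq_eq (hF : Fintype.card F = (p ^ k) ^ 2)
    (h2 : (2 : F) ≠ 0) {δ : F} (hδ : δ ≠ 0) (hδq : δ ^ p ^ k = -δ) :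
    {y : F | (y ^ p ^ k) ^ 2 - y ^ 2 = δ}.ncard = p ^ k - 1 := by
  rw [(bijOn_pow_expChar_pow_sub_self hF h2 hδ hδq).ncard_eq,
    Set.ncard_sdiff_singleton_of_mem (by simp [zero_pow (expChar_pow_pos F p k).ne']),
    ncard_setOf_pow_expChar_pow_eq_neg hF]

end FrobeniusOfQuadraticExtension

theorem IsPrimitiveRoot.ncard_setOf_pow_val_mem {R : Type*} [CommRing R] [IsDomain R] {ζ : R}
    {n : ℕ} [NeZero n] (h : IsPrimitiveRoot ζ n) {S : Set R} (hS : ∀ x ∈ S, x ^ n = 1) :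
    {a : ZMod n | ζ ^ a.val ∈ S}.ncard = S.ncard := by
  refine Set.ncard_preimage_of_injective_subset_range (f := fun a : ZMod n => ζ ^ a.val)
    (fun a b hab => ZMod.val_injective n (h.pow_inj (ZMod.val_lt a) (ZMod.val_lt b) hab)) ?_
  intro x hx
  obtain ⟨i, hi, rfl⟩ := h.eq_pow_of_pow_eq_one (hS x hx)
  exact ⟨i, by simp [ZMod.val_cast_of_lt hi]⟩

theorem IsPrimitiveRoot.pow_sub_self_ne_zero {F : Type*} [Field F] {θ : F} {q : ℕ}
    (h : IsPrimitiveRoot θ (q ^ 2 - 1)) (hq : 1 < q) : θ ^ q - θ ≠ 0 := by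
  have hq2 : q < q ^ 2 := lt_self_pow₀ hq one_lt_two
  have hθ : θ ≠ 0 := h.ne_zero (by omega)
  refine sub_ne_zero.mpr fun hfix => h.pow_ne_one_of_pos_of_lt (l := q - 1) (by omega)
    (by omega) (mul_right_cancel₀ hθ ?_)
  rw [← pow_succ, Nat.sub_add_cancel hq.le, hfix, one_mul]

theorem add_self_mem_boseChowla_iff {F : Type*} [Field F] {p k : ℕ} [ExpChar F p]
    [NeZero ((p ^ k) ^ 2 - 1)] {θ : F}
    (hθ : θ ^ ((p ^ k) ^ 2 - 1) = 1) (x : ZMod ((p ^ k) ^ 2 - 1)) :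
    x + x ∈ BoseChowla (p ^ k) θ ↔
      ((θ ^ x.val) ^ p ^ k) ^ 2 - (θ ^ x.val) ^ 2 = θ ^ p ^ k - θ := by
  change (θ ^ (x + x).val - θ) ^ p ^ k = θ ^ (x + x).val - θ ↔ _
  rw [ZMod.val_add, ← pow_eq_pow_mod _ hθ, pow_add, ← sq, sub_pow_expChar_pow, pow_right_comm _ 2]
  exact sub_eq_sub_iff_sub_eq_sub

theorem absolute_points_odd (q : ℕ) (hq : IsPrimePow q) (hodd : Odd q) (F : Type*) [Field F]
    [Fintype F] (hF : Fintype.card F = q ^ 2) (θ : F) (hθ : orderOf θ = q ^ 2 - 1) :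
    {x : ZMod (q ^ 2 - 1) | x + x ∈ BoseChowla q θ}.ncard = q - 1 := by
  obtain ⟨p, k, hp, hk, rfl⟩ := hq
  have : Fact p.Prime := ⟨hp.nat_prime⟩
  have : CharP F p := charP_of_card_eq_prime_pow (by rw [hF, ← pow_mul])
  have hq : 1 < p ^ k := Nat.one_lt_pow hk.ne' hp.nat_prime.one_lt
  have : NeZero ((p ^ k) ^ 2 - 1) := ⟨Nat.sub_ne_zero_of_lt (Nat.one_lt_pow two_ne_zero hq)⟩
  have hp2 : p ≠ 2 := by
    rintro rfl
    exact Nat.not_even_iff_odd.mpr hodd ((Nat.even_pow' hk.ne').mpr even_two)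
  have h2 : (2 : F) ≠ 0 := Ring.two_ne_zero (ringChar.eq F p ▸ hp2)
  have hθ' : IsPrimitiveRoot θ ((p ^ k) ^ 2 - 1) := hθ ▸ IsPrimitiveRoot.orderOf θ
  have hδ : θ ^ p ^ k - θ ≠ 0 := hθ'.pow_sub_self_ne_zero hq
  set S := {y : F | (y ^ p ^ k) ^ 2 - y ^ 2 = θ ^ p ^ k - θ}
  have hS : ∀ y ∈ S, y ^ ((p ^ k) ^ 2 - 1) = 1 := by
    intro y hy
    refine hF ▸ FiniteField.pow_card_sub_one_eq_one y fun hy0 => hδ ?_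
    simpa [hy0, zero_pow (expChar_pow_pos F p k).ne'] using hy.out.symm
  calc _ = {x : ZMod _ | θ ^ x.val ∈ S}.ncard := by
        congr 1
        ext x
        exact add_self_mem_boseChowla_iff hθ'.pow_eq_one x
    _ = S.ncard := hθ'.ncard_setOf_pow_val_mem hS
    _ = p ^ k - 1 :=
        ncard_setOf_sq_pow_expChar_pow_sub_sq_eq hF h2 hδ (pow_expChar_pow_sub_self_pow hF θ)
end

section
/- If q is a power of 2, then there exists x ∈ ℤ/(q²-1) such that x + y ∈ A(q,θ) for every y ∈ ℤ/(q²-1) satisfying y + y ∈ A(q,θ); that is, some vertex of G_{q,θ} is adjacent to every absolute point. -/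
section CharTwo

variable {R : Type*} [CommRing R] [CharP R 2] {α : ℕ} {θ s t : R}

theorem pow_two_pow_eq_self_of_sq_eq_trace [IsReduced R] (hθ : θ ^ (2 ^ α) ^ 2 = θ)
    (hs : s ^ 2 = θ ^ 2 ^ α + θ) : s ^ 2 ^ α = s := by
  apply frobenius_inj R 2
  rw [frobenius_def, frobenius_def, ← pow_mul, mul_comm, pow_mul, hs, add_pow_char_pow,
    ← pow_mul, ← sq, hθ, add_comm]

theorem pow_two_pow_eq_add_of_sq_add_fixed [IsReduced R] (hs : s ^ 2 = θ ^ 2 ^ α + θ)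
    (ht : (t ^ 2 + θ) ^ 2 ^ α = t ^ 2 + θ) : t ^ 2 ^ α = t + s := by
  apply frobenius_inj R 2
  rw [add_pow_char_pow, ← pow_mul, mul_comm, pow_mul] at ht
  have h2 : (2 : R) = 0 := CharTwo.two_eq_zero
  simp only [frobenius_def]
  linear_combination ht - hs - (θ ^ 2 ^ α + t * s) * h2

theorem mul_add_pow_two_pow_eq_self (hs : s ^ 2 = θ ^ 2 ^ α + θ) (hsq : s ^ 2 ^ α = s)
    (ht : t ^ 2 ^ α = t + s) : (s * t + θ) ^ 2 ^ α = s * t + θ := by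
  have h2 : (2 : R) = 0 := CharTwo.two_eq_zero
  rw [add_pow_char_pow, mul_pow, hsq, ht]
  linear_combination hs + θ ^ 2 ^ α * h2

end CharTwo

section ZModExponent

variable {M : Type*} [Monoid M] {n : ℕ} {θ : M}

theorem pow_val_add_of_orderOf_eq_s10 [NeZero n] (hθ : orderOf θ = n) (u v : ZMod n) :
    θ ^ (u + v).val = θ ^ u.val * θ ^ v.val := by
  subst hθ
  rw [ZMod.val_add, pow_mod_orderOf, pow_add]

theorem pow_val_natCast_of_orderOf_eq (hθ : orderOf θ = n) (m : ℕ) :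
    θ ^ (m : ZMod n).val = θ ^ m := by
  subst hθ
  rw [ZMod.val_natCast, pow_mod_orderOf]

end ZModExponent

theorem common_neighbor_of_absolute_points_general (q α : ℕ) (hq : q = 2 ^ α)
    (F : Type*) [Field F] [Fintype F] (hF : Fintype.card F = q ^ 2)
    (θ : F) (hθ : orderOf θ = q ^ 2 - 1) :
    ∃ x : ZMod (q ^ 2 - 1), ∀ y : ZMod (q ^ 2 - 1),
      y + y ∈ BoseChowla q θ → x + y ∈ BoseChowla q θ := by
  have : CharP F 2 := charP_of_card_eq_prime_pow (f := α * 2) (by rw [hF, hq, pow_mul])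
  have hq2 : 2 ≤ q := by
    have := hF ▸ Fintype.one_lt_card (α := F)
    by_contra! h
    interval_cases q <;> simp at this
  have hq_lt : q + 2 ≤ q ^ 2 := by nlinarith
  have : NeZero (q ^ 2 - 1) := ⟨by omega⟩
  have hθfix : θ ^ q ^ 2 = θ := hF ▸ FiniteField.pow_card θ
  have hθq : θ ^ q ≠ θ ^ 1 := by
    rw [Ne, (orderOf_pos_iff.mp (by omega)).pow_inj_mod, hθ, Nat.mod_eq_of_lt (by omega),
      Nat.mod_eq_of_lt (by omega)]
    omega
  obtain ⟨s, hs⟩ := isSquare_of_charTwo' (θ ^ q + θ)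
  rw [← sq, eq_comm] at hs
  have hs0 : s ≠ 0 := by
    rintro rfl
    exact hθq (by rw [pow_one, ← CharTwo.add_eq_zero, ← hs, zero_pow two_ne_zero])
  obtain ⟨m, -, rfl⟩ := (hθ ▸ IsPrimitiveRoot.orderOf θ).eq_pow_of_pow_eq_one
    (hF ▸ FiniteField.pow_card_sub_one_eq_one _ hs0)
  refine ⟨m, fun y hy => ?_⟩
  simp only [BoseChowla, Set.mem_ofPred_eq, CharTwo.sub_eq_add, pow_val_add_of_orderOf_eq_s10 hθ,
    pow_val_natCast_of_orderOf_eq hθ, ← sq] at hy ⊢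
  subst hq
  exact mul_add_pow_two_pow_eq_self hs (pow_two_pow_eq_self_of_sq_eq_trace hθfix hs)
    (pow_two_pow_eq_add_of_sq_add_fixed hs hy)

theorem common_neighbor_of_absolute_points (q α : ℕ) (hα : 0 < α) (hq : q = 2 ^ α)
    (F : Type*) [Field F] [Fintype F] (hF : Fintype.card F = q ^ 2)
    (θ : F) (hθ : orderOf θ = q ^ 2 - 1) :
    ∃ x : ZMod (q ^ 2 - 1), ∀ y : ZMod (q ^ 2 - 1),
      y + y ∈ BoseChowla q θ → x + y ∈ BoseChowla q θ :=
  common_neighbor_of_absolute_points_general q α hq F hF θ hθ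
end

section
/- If q is a power of 2, then G_{q,θ} has exactly q absolute points and (q³ - 2q)/2 edges. -/
/-!
Since `θ` generates `F^×`, the map `a ↦ θ^a` identifies `A(q,θ)` with the translate `θ + F_q`
of the subfield fixed by `s ↦ s^q`. This translate misses `0`, since `-θ ∈ F_q` would force
`θ^(2(q-1)) = 1`; hence `|A(q,θ)| = q`. For even `q` the modulus `q² - 1` is odd, so doubling
is a bijection of `ℤ/(q²-1)` and there are exactly `q` absolute points. In a Cayley sum graph
the neighbours of `x` are the `|A|` elements `y` with `x + y ∈ A`, except `y = x` when `x` is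
absolute, so summing degrees gives `2|E| = (q² - 1) q - q`.
-/

namespace IsPrimitiveRoot

section CommRing

variable {R : Type*} [CommRing R] [IsDomain R] {q : ℕ}

theorem ncard_pow_eq_self {ζ : R} (hq : 1 < q) (hζ : IsPrimitiveRoot ζ (q - 1)) :
    {s : R | s ^ q = s}.ncard = q := by
  have hroots : {s : R | s ^ q = s} = insert 0 ↑(Polynomial.nthRootsFinset (q - 1) (1 : R)) := by
    ext s
    rw [Set.mem_insert_iff, Finset.mem_coe, Polynomial.mem_nthRootsFinset (by omega),
      Set.mem_ofPred_eq, ← Nat.sub_add_cancel hq.le, pow_succ, mul_left_eq_self₀,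
      Nat.add_sub_cancel, or_comm]
  have h0 : (0 : R) ∉ Polynomial.nthRootsFinset (q - 1) (1 : R) := by
    simp [Polynomial.mem_nthRootsFinset (show 0 < q - 1 by omega),
      zero_pow (show q - 1 ≠ 0 by omega)]
  rw [hroots, Set.ncard_insert_of_notMem h0, Set.ncard_coe_finset, hζ.card_nthRootsFinset]
  omega

theorem neg_pow_ne_neg {θ : R} (hq : 1 < q) (hθ : IsPrimitiveRoot θ (q ^ 2 - 1)) :
    (-θ) ^ q ≠ -θ := by
  intro h
  have hq2 : 2 * q ≤ q ^ 2 := by nlinarith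
  have hθ0 : -θ ≠ 0 := neg_ne_zero.mpr (hθ.ne_zero (by omega))
  have hroot : (-θ) ^ (q - 1) = 1 := by
    rwa [← Nat.sub_add_cancel hq.le, pow_succ, mul_eq_right₀ hθ0] at h
  have hpow : θ ^ (2 * (q - 1)) = 1 := by
    rw [pow_mul, ← neg_sq, ← pow_mul, mul_comm, pow_mul, hroot, one_pow]
  have hle := Nat.le_of_dvd (by omega) (hθ.dvd_of_pow_eq_one _ hpow)
  omega

end CommRing

theorem zmod_pow_val_injective {M : Type*} [CommMonoid M] {θ : M} {n : ℕ} [NeZero n]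
    (hθ : IsPrimitiveRoot θ n) : Function.Injective fun a : ZMod n => θ ^ a.val :=
  fun a b h => ZMod.val_injective n (hθ.pow_inj a.val_lt b.val_lt h)

theorem exists_zmod_pow_val_eq {F : Type*} [Field F] [Fintype F] {θ : F} {n : ℕ}
    (hθ : IsPrimitiveRoot θ n) (hF : Fintype.card F = n + 1) {x : F} (hx : x ≠ 0) :
    ∃ a : ZMod n, θ ^ a.val = x := by
  have : NeZero n := ⟨by have := Fintype.one_lt_card (α := F); omega⟩
  obtain ⟨i, hi, rfl⟩ :=
    hθ.eq_pow_of_pow_eq_one (by simpa [hF] using FiniteField.pow_card_sub_one_eq_one x hx)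
  exact ⟨i, by rw [ZMod.val_cast_of_lt hi]⟩

end IsPrimitiveRoot

theorem ncard_boseChowla {q : ℕ} {F : Type*} [Field F] [Fintype F] {θ : F} (hq : 1 < q)
    (hF : Fintype.card F = q ^ 2) (hθ : IsPrimitiveRoot θ (q ^ 2 - 1)) :
    (BoseChowla q θ).ncard = q := by
  have hq2 : 2 * q ≤ q ^ 2 := by nlinarith
  have : NeZero (q ^ 2 - 1) := ⟨by omega⟩
  have hζ : IsPrimitiveRoot (θ ^ (q + 1)) (q - 1) :=
    hθ.pow (by omega) (by rw [← one_pow 2, Nat.sq_sub_sq, one_pow])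
  let T : Set F := (· - θ) ⁻¹' {s | s ^ q = s}
  have hT : T.ncard = q :=
    (Set.ncard_preimage_of_injective_subset_range sub_left_injective
      fun s _ => ⟨s + θ, add_sub_cancel_right s θ⟩).trans (hζ.ncard_pow_eq_self hq)
  have hT_sub : T ⊆ Set.range fun a : ZMod (q ^ 2 - 1) => θ ^ a.val := by
    refine fun t ht => hθ.exists_zmod_pow_val_eq (by omega) ?_
    rintro rfl
    have h0 : (0 - θ) ^ q = 0 - θ := ht
    rw [zero_sub] at h0
    exact hθ.neg_pow_ne_neg hq h0
  exact (Set.ncard_preimage_of_injective_subset_range hθ.zmod_pow_val_injective hT_sub).trans hT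

theorem ncard_add_self_preimage {R : Type*} [Ring R] (h2 : IsUnit (2 : R)) (A : Set R) :
    ((fun x => x + x) ⁻¹' A).ncard = A.ncard := by
  have hdouble : (fun x : R => x + x) = (2 * ·) := funext fun x => (two_mul x).symm
  rw [hdouble]
  refine Set.ncard_preimage_of_injective_subset_range h2.mul_right_injective fun a _ => ?_
  exact ⟨h2.unit⁻¹ * a, show 2 * (_ * a) = a by rw [← mul_assoc, h2.mul_val_inv, one_mul]⟩

theorem ZMod.isUnit_two_of_odd {n : ℕ} (hn : Odd n) : IsUnit (2 : ZMod n) := by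
  exact_mod_cast (ZMod.isUnit_iff_coprime 2 n).mpr (Nat.coprime_two_left.mpr hn)

section CayleySum

variable {G : Type*} [AddCommGroup G]

def cayleySumGraph (A : Set G) : SimpleGraph G :=
  SimpleGraph.fromRel fun x y => x + y ∈ A

theorem neighborSet_cayleySumGraph (A : Set G) (x : G) :
    (cayleySumGraph A).neighborSet x = (x + ·) ⁻¹' A \ {x} := by
  ext y
  simp [cayleySumGraph, add_comm y x, ne_comm, and_comm]

open Classical in
theorem ncard_neighborSet_cayleySumGraph_add_ite [Finite G] (A : Set G) (x : G) :
    ((cayleySumGraph A).neighborSet x).ncard + (if x + x ∈ A then 1 else 0) = A.ncard := by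
  have htranslate : ((x + ·) ⁻¹' A).ncard = A.ncard :=
    Set.ncard_preimage_of_injective_subset_range (add_right_injective x)
      fun a _ => ⟨a - x, add_sub_cancel x a⟩
  rw [neighborSet_cayleySumGraph, ← htranslate]
  split_ifs with hx
  · exact Set.ncard_sdiff_singleton_add_one hx
  · rw [add_zero, Set.sdiff_singleton_eq_self (show x ∉ (x + ·) ⁻¹' A from hx)]

theorem two_mul_ncard_edgeSet_cayleySumGraph_add [Fintype G] (A : Set G) :
    2 * (cayleySumGraph A).edgeSet.ncard + {x | x + x ∈ A}.ncard =
      Fintype.card G * A.ncard := by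
  classical
  have hdeg (x : G) : (cayleySumGraph A).degree x = ((cayleySumGraph A).neighborSet x).ncard := by
    rw [Set.ncard_eq_toFinset_card', ← SimpleGraph.neighborFinset_def]; rfl
  rw [← SimpleGraph.coe_edgeFinset, Set.ncard_coe_finset,
    ← SimpleGraph.sum_degrees_eq_twice_card_edges, Set.ncard_eq_toFinset_card',
    Set.toFinset_ofPred, Finset.card_filter, ← Finset.sum_add_distrib]
  simp only [hdeg, ncard_neighborSet_cayleySumGraph_add_ite]
  simp

end CayleySum

theorem cayley_graph_even_q (q α : ℕ) (hα : 0 < α) (hq : q = 2 ^ α)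
    (F : Type*) [Field F] [Fintype F] (hF : Fintype.card F = q ^ 2)
    (θ : F) (hθ : orderOf θ = q ^ 2 - 1) :
    {x : ZMod (q ^ 2 - 1) | x + x ∈ BoseChowla q θ}.ncard = q ∧
      2 * (CayleyGraph q θ).edgeSet.ncard = q ^ 3 - 2 * q := by
  have hq1 : 1 < q := hq ▸ Nat.one_lt_two_pow hα.ne'
  have hA : (BoseChowla q θ).ncard = q :=
    ncard_boseChowla hq1 hF (hθ ▸ IsPrimitiveRoot.orderOf θ)
  have hq_even : Even q := hq ▸ Nat.even_pow.mpr ⟨even_two, hα.ne'⟩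
  have hodd : Odd (q ^ 2 - 1) :=
    Nat.Even.sub_odd (by nlinarith) (Nat.even_pow.mpr ⟨hq_even, two_ne_zero⟩) odd_one
  have habs : {x : ZMod (q ^ 2 - 1) | x + x ∈ BoseChowla q θ}.ncard = q :=
    (ncard_add_self_preimage (ZMod.isUnit_two_of_odd hodd) _).trans hA
  refine ⟨habs, ?_⟩
  have : NeZero (q ^ 2 - 1) := ⟨hodd.pos.ne'⟩
  have hcount := two_mul_ncard_edgeSet_cayleySumGraph_add (BoseChowla q θ)
  rw [ZMod.card, habs, hA, Nat.sub_mul, one_mul, show q ^ 2 * q = q ^ 3 by ring] at hcount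
  have hq_le : q ≤ q ^ 3 := Nat.le_self_pow (by norm_num) q
  change 2 * (cayleySumGraph (BoseChowla q θ)).edgeSet.ncard = _
  omega
end

section
/- Suppose 1 ≤ i < j < k ≤ q satisfy i + j = k, and let s ≠ t with 0 ≤ s,t ≤ q-2 satisfy s + t ≡ -(m_i + m_j - m_k) (mod q-1), where a_ℓ = ℓ + m_ℓ(q+1) are the elements of A(q,θ). Then a_i + a_j + (s+t)(q+1) ∈ A(q,θ), and consequently the six vertices u₁ = a_i + s(q+1), v₁ = a_i + t(q+1), u₂ = a_j + s(q+1), v₂ = a_j + t(q+1), w₁ = (q-1-s)(q+1), w₂ = (q-1-t)(q+1) form a 6-cycle u₁w₁u₂v₁w₂v₂ in G_{q,θ}. -/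
/-!
Residues modulo `q² - 1 = (q - 1)(q + 1)` are written `ℓ + r (q + 1)` with `0 ≤ ℓ ≤ q` and `r`
taken modulo `q - 1`. The six vertices have `ℓ ∈ {i, 0, j}`, and the two ends of each edge of
the hexagon have different `ℓ`, so they are distinct. Each edge sum is `a_i`, `a_j`, or
`i + j + (m_i + m_j + s + t)(q + 1)`, which the congruence on `s + t` identifies with `a_k`.
Vertices with the same `ℓ` differ in `r` by `±(s - t)`, which is nonzero modulo `q - 1`
because `0 ≤ s, t ≤ q - 2`.
-/

theorem Int.ModEq.eq_of_lt_of_lt {n a b : ℤ} (h : a ≡ b [ZMOD n]) (ha₀ : 0 ≤ a) (ha : a < n)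
    (hb₀ : 0 ≤ b) (hb : b < n) : a = b := by
  rwa [Int.ModEq, Int.emod_eq_of_lt ha₀ ha, Int.emod_eq_of_lt hb₀ hb] at h

theorem Int.add_mul_modEq_add_mul_iff {a b ℓ ℓ' r r' : ℤ} (hℓ₀ : 0 ≤ ℓ) (hℓ : ℓ < b)
    (hℓ'₀ : 0 ≤ ℓ') (hℓ' : ℓ' < b) :
    ℓ + r * b ≡ ℓ' + r' * b [ZMOD a * b] ↔ ℓ = ℓ' ∧ r ≡ r' [ZMOD a] := by
  refine ⟨fun h => ?_, fun ⟨hℓℓ', hr⟩ => hℓℓ' ▸ (hr.mul_right' (c := b)).add_left ℓ⟩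
  have hℓℓ' : ℓ = ℓ' := by
    have h' := h.of_mul_left a
    rw [Int.ModEq, Int.add_mul_emod_self_right, Int.add_mul_emod_self_right] at h'
    exact Int.ModEq.eq_of_lt_of_lt h' hℓ₀ hℓ hℓ'₀ hℓ'
  subst hℓℓ'
  exact ⟨rfl, (Int.ModEq.add_left_cancel' ℓ h).mul_right_cancel' (by omega)⟩

section MixedRadix

variable {q : ℕ}

def mixedRadix (q ℓ : ℕ) (r : ℤ) : ZMod (q ^ 2 - 1) := ℓ + r * (q + 1)

theorem mixedRadix_eq_mixedRadix_iff (hq : 0 < q) {ℓ ℓ' : ℕ} {r r' : ℤ} (hℓ : ℓ < q + 1)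
    (hℓ' : ℓ' < q + 1) :
    mixedRadix q ℓ r = mixedRadix q ℓ' r' ↔ ℓ = ℓ' ∧ r ≡ r' [ZMOD q - 1] := by
  have hN : ((q ^ 2 - 1 : ℕ) : ℤ) = (q - 1) * (q + 1) := by
    rw [Nat.cast_sub (Nat.one_le_pow _ _ hq)]; push_cast; ring
  have key := ZMod.intCast_eq_intCast_iff (ℓ + r * (q + 1)) (ℓ' + r' * (q + 1)) (q ^ 2 - 1)
  push_cast at key
  rw [mixedRadix, mixedRadix, key, hN, Int.add_mul_modEq_add_mul_iff (by omega) (by omega)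
    (by omega) (by omega), Nat.cast_inj]

theorem mixedRadix_ne_mixedRadix (hq : 0 < q) {ℓ ℓ' : ℕ} (r r' : ℤ) (hℓ : ℓ < q + 1)
    (hℓ' : ℓ' < q + 1) (hne : ℓ ≠ ℓ') : mixedRadix q ℓ r ≠ mixedRadix q ℓ' r' :=
  fun h => hne ((mixedRadix_eq_mixedRadix_iff hq hℓ hℓ').1 h).1

theorem mixedRadix_add (ℓ ℓ' : ℕ) (r r' : ℤ) :
    mixedRadix q ℓ r + mixedRadix q ℓ' r' = mixedRadix q (ℓ + ℓ') (r + r') := by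
  simp only [mixedRadix]; push_cast; ring

theorem mixedRadix_eq_natCast (hq : 0 < q) {ℓ n : ℕ} {r : ℤ} (hℓ : ℓ < q + 1)
    (hr : r ≡ n [ZMOD q - 1]) :
    mixedRadix q ℓ r = ((ℓ + n * (q + 1) : ℕ) : ZMod (q ^ 2 - 1)) := by
  rw [(mixedRadix_eq_mixedRadix_iff hq hℓ hℓ).2 ⟨rfl, hr⟩, mixedRadix]
  push_cast
  ring

theorem natCast_sub_mul_eq_mixedRadix (hq : 0 < q) {s : ℕ} (hs : s ≤ q - 1) :
    (((q - 1 - s) * (q + 1) : ℕ) : ZMod (q ^ 2 - 1)) = mixedRadix q 0 (-s) := by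
  rw [mixedRadix_eq_natCast hq (n := q - 1 - s) (by omega) (Int.modEq_iff_dvd.2 ⟨1, by omega⟩),
    zero_add]

theorem mixedRadix_hexagon_nodup (hq : 0 < q) {ℓ₁ ℓ₂ : ℕ} (h₁ : 0 < ℓ₁) (h₁₂ : ℓ₁ < ℓ₂)
    (h₂ : ℓ₂ < q + 1) (x₁ x₂ : ℤ) {s t : ℤ} (hst : ¬s ≡ t [ZMOD q - 1]) :
    [mixedRadix q ℓ₁ (x₁ + s), mixedRadix q 0 (-s), mixedRadix q ℓ₂ (x₂ + s),
      mixedRadix q ℓ₁ (x₁ + t), mixedRadix q 0 (-t), mixedRadix q ℓ₂ (x₂ + t)].Nodup := by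
  have hst' : ∀ x : ℤ, ¬x + s ≡ x + t [ZMOD q - 1] := fun x h => hst (h.add_left_cancel' x)
  have h₁₀ : ℓ₁ ≠ 0 := h₁.ne'
  have h₂₀ : ℓ₂ ≠ 0 := by omega
  simp [mixedRadix_eq_mixedRadix_iff hq, h₂, h₁₂.trans h₂, Int.neg_modEq_neg, hst, hst',
    h₁₂.ne, h₁₂.ne', h₁₀, h₂₀, h₁₀.symm, h₂₀.symm]

theorem cayleyGraph_adj_mixedRadix {F : Type*} [Field F] {θ : F} (hq : 0 < q) {ℓ ℓ' : ℕ}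
    {r r' : ℤ} (hℓ : ℓ < q + 1) (hℓ' : ℓ' < q + 1) (hne : ℓ ≠ ℓ')
    (hmem : mixedRadix q (ℓ + ℓ') (r + r') ∈ BoseChowla q θ) :
    (CayleyGraph q θ).Adj (mixedRadix q ℓ r) (mixedRadix q ℓ' r') :=
  (SimpleGraph.fromRel_adj _ _ _).2
    ⟨mixedRadix_ne_mixedRadix hq r r' hℓ hℓ' hne, Or.inl (mixedRadix_add ℓ ℓ' r r' ▸ hmem)⟩

end MixedRadix

theorem six_cycle_general (q : ℕ) (F : Type*) [Field F] (θ : F) (m : ℕ → ℕ)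
    (ha : ∀ ℓ, 1 ≤ ℓ → ℓ ≤ q →
      ((ℓ + m ℓ * (q + 1) : ℕ) : ZMod (q ^ 2 - 1)) ∈ BoseChowla q θ)
    (i j k s t : ℕ) (hi : 1 ≤ i) (hij : i < j) (hkq : k ≤ q)
    (hijk : i + j = k) (hst : s ≠ t) (hs : s ≤ q - 2) (ht : t ≤ q - 2)
    (hcong : Int.ModEq ((q : ℤ) - 1) ((s : ℤ) + t) (-((m i : ℤ) + (m j : ℤ) - (m k : ℤ)))) :
    (((i + m i * (q + 1)) + (j + m j * (q + 1)) + (s + t) * (q + 1) : ℕ) :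
        ZMod (q ^ 2 - 1)) ∈ BoseChowla q θ ∧
    ∀ u₁ v₁ u₂ v₂ w₁ w₂ : ZMod (q ^ 2 - 1),
      u₁ = ((i + m i * (q + 1) + s * (q + 1) : ℕ) : ZMod (q ^ 2 - 1)) →
      v₁ = ((i + m i * (q + 1) + t * (q + 1) : ℕ) : ZMod (q ^ 2 - 1)) →
      u₂ = ((j + m j * (q + 1) + s * (q + 1) : ℕ) : ZMod (q ^ 2 - 1)) →
      v₂ = ((j + m j * (q + 1) + t * (q + 1) : ℕ) : ZMod (q ^ 2 - 1)) →
      w₁ = (((q - 1 - s) * (q + 1) : ℕ) : ZMod (q ^ 2 - 1)) →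
      w₂ = (((q - 1 - t) * (q + 1) : ℕ) : ZMod (q ^ 2 - 1)) →
        [u₁, w₁, u₂, v₁, w₂, v₂].Nodup ∧
        (CayleyGraph q θ).Adj u₁ w₁ ∧ (CayleyGraph q θ).Adj w₁ u₂ ∧
        (CayleyGraph q θ).Adj u₂ v₁ ∧ (CayleyGraph q θ).Adj v₁ w₂ ∧
        (CayleyGraph q θ).Adj w₂ v₂ ∧ (CayleyGraph q θ).Adj v₂ u₁ := by
  have hq : 0 < q := by omega
  have hcast (ℓ r : ℕ) : ((ℓ + m ℓ * (q + 1) + r * (q + 1) : ℕ) : ZMod (q ^ 2 - 1)) =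
      mixedRadix q ℓ (m ℓ + r) := by
    simp only [mixedRadix]; push_cast; ring
  have mem {L : ℕ} {R : ℤ} (ℓ : ℕ) (h₁ : 1 ≤ ℓ) (h₂ : ℓ ≤ q) (hL : L = ℓ)
      (hR : ((q : ℤ) - 1) ∣ m ℓ - R) : mixedRadix q L R ∈ BoseChowla q θ := by
    rw [hL, mixedRadix_eq_natCast hq (by omega) (Int.modEq_iff_dvd.2 hR)]
    exact ha ℓ h₁ h₂
  have memK : ∀ x y : ℤ, x + y = s + t →
      mixedRadix q (j + i) (m j + x + (m i + y)) ∈ BoseChowla q θ :=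
    fun x y hxy => mem k (by omega) hkq (by omega) <| by
      convert hcong.dvd using 1; linear_combination -hxy
  refine ⟨?_, ?_⟩
  · convert memK s t rfl using 1
    simp only [mixedRadix]; push_cast; ring
  rintro u₁ v₁ u₂ v₂ w₁ w₂ rfl rfl rfl rfl rfl rfl
  rw [hcast, hcast, hcast, hcast, natCast_sub_mul_eq_mixedRadix hq (by omega),
    natCast_sub_mul_eq_mixedRadix hq (by omega)]
  have hst' : ¬(s : ℤ) ≡ t [ZMOD q - 1] := fun h =>
    hst (by exact_mod_cast h.eq_of_lt_of_lt (by omega) (by omega) (by omega) (by omega))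
  have memI : ∀ r : ℤ, mixedRadix q (i + 0) (m i + r + -r) ∈ BoseChowla q θ :=
    fun r => mem i hi (by omega) rfl ⟨0, by ring⟩
  have memJ : ∀ r : ℤ, mixedRadix q (0 + j) (-r + (m j + r)) ∈ BoseChowla q θ :=
    fun r => mem j (by omega) (by omega) (zero_add j) ⟨0, by ring⟩
  exact ⟨mixedRadix_hexagon_nodup hq hi hij (by omega) _ _ hst',
    cayleyGraph_adj_mixedRadix hq (by omega) (by omega) (by omega) (memI s),
    cayleyGraph_adj_mixedRadix hq (by omega) (by omega) (by omega) (memJ s),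
    cayleyGraph_adj_mixedRadix hq (by omega) (by omega) (by omega) (memK s t rfl),
    cayleyGraph_adj_mixedRadix hq (by omega) (by omega) (by omega) (memI t),
    cayleyGraph_adj_mixedRadix hq (by omega) (by omega) (by omega) (memJ t),
    cayleyGraph_adj_mixedRadix hq (by omega) (by omega) (by omega) (memK t s (add_comm _ _))⟩

theorem six_cycle (q : ℕ) (hq : IsPrimePow q) (hq4 : 4 ≤ q) (F : Type*) [Field F]
    [Fintype F] (hF : Fintype.card F = q ^ 2) (θ : F) (hθ : orderOf θ = q ^ 2 - 1)
    (m : ℕ → ℕ) (hm : ∀ ℓ, 1 ≤ ℓ → ℓ ≤ q → m ℓ ≤ q - 2)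
    (ha : ∀ ℓ, 1 ≤ ℓ → ℓ ≤ q →
      ((ℓ + m ℓ * (q + 1) : ℕ) : ZMod (q ^ 2 - 1)) ∈ BoseChowla q θ)
    (i j k s t : ℕ) (hi : 1 ≤ i) (hij : i < j) (hjk : j < k) (hkq : k ≤ q)
    (hijk : i + j = k) (hst : s ≠ t) (hs : s ≤ q - 2) (ht : t ≤ q - 2)
    (hcong : Int.ModEq ((q : ℤ) - 1) ((s : ℤ) + t) (-((m i : ℤ) + (m j : ℤ) - (m k : ℤ)))) :
    (((i + m i * (q + 1)) + (j + m j * (q + 1)) + (s + t) * (q + 1) : ℕ) :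
        ZMod (q ^ 2 - 1)) ∈ BoseChowla q θ ∧
    ∀ u₁ v₁ u₂ v₂ w₁ w₂ : ZMod (q ^ 2 - 1),
      u₁ = ((i + m i * (q + 1) + s * (q + 1) : ℕ) : ZMod (q ^ 2 - 1)) →
      v₁ = ((i + m i * (q + 1) + t * (q + 1) : ℕ) : ZMod (q ^ 2 - 1)) →
      u₂ = ((j + m j * (q + 1) + s * (q + 1) : ℕ) : ZMod (q ^ 2 - 1)) →
      v₂ = ((j + m j * (q + 1) + t * (q + 1) : ℕ) : ZMod (q ^ 2 - 1)) →
      w₁ = (((q - 1 - s) * (q + 1) : ℕ) : ZMod (q ^ 2 - 1)) →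
      w₂ = (((q - 1 - t) * (q + 1) : ℕ) : ZMod (q ^ 2 - 1)) →
        [u₁, w₁, u₂, v₁, w₂, v₂].Nodup ∧
        (CayleyGraph q θ).Adj u₁ w₁ ∧ (CayleyGraph q θ).Adj w₁ u₂ ∧
        (CayleyGraph q θ).Adj u₂ v₁ ∧ (CayleyGraph q θ).Adj v₁ w₂ ∧
        (CayleyGraph q θ).Adj w₂ v₂ ∧ (CayleyGraph q θ).Adj v₂ u₁ :=
  six_cycle_general q F θ m ha i j k s t hi hij hkq hijk hst hs ht hcong
end
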